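/- arXiv:hep-th/9807210 — 3 statements merged into one kernel-verified Lean document; each statement's English description precedes it below -/
import Mathlib

section
/- Under the assumption that the cohomology of s̃ = (S̃,·)~ on E is trivial, the map m sending an s_Q-cocycle ξ*_D μ^D(ξ) to the s̄-cocycle (∂^R S(ξ)/∂ξ^C) μ^C(ξ) induces a well-defined isomorphism m: H(s_Q, G) → H(s̄, F) of cohomology groups. -/
/-- Assuming H(s̃,E) = 0, the map m sending an s_Q-cocycle
ξ*_D μ^D to the s̄-cocycle (∂^R S/∂ξ^C) μ^C induces a well-defined isomorphism
m : H(s_Q,G) → H(s̄,F).  Here s̃(A,g) = (s̄A + m g, s_Q g) on E = F ⊕ G, and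
acyclicity of s̃ is the statement `hacyc`.  Well-definedness, injectivity and
surjectivity of the induced map are the four conclusions. -/
theorem m_induces_cohomology_isomorphism
    {F G : Type*} [AddCommGroup F] [Module ℚ F] [AddCommGroup G] [Module ℚ G]
    (sbar : F →ₗ[ℚ] F) (sQ : G →ₗ[ℚ] G) (m : G →ₗ[ℚ] F)
    (hsbar2 : ∀ A, sbar (sbar A) = 0)
    (hsQ2 : ∀ g, sQ (sQ g) = 0)
    -- chain-map property coming from s̃² = 0
    (hchain : ∀ g : G, sbar (m g) + m (sQ g) = 0)
    -- H(s̃,E) = 0: (S̃,𝒜)~ = 0 iff 𝒜 = (S̃,ℬ)~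
    (hacyc : ∀ (A : F) (g : G), sbar A + m g = 0 → sQ g = 0 →
      ∃ (B : F) (h : G), A = sbar B + m h ∧ g = sQ h) :
    -- m maps s_Q-cocycles to s̄-cocycles
    (∀ g : G, sQ g = 0 → sbar (m g) = 0)
    -- m maps s_Q-coboundaries to s̄-coboundaries (well-definedness)
    ∧ (∀ h : G, ∃ B : F, m (sQ h) = sbar B)
    -- injectivity of the induced map
    ∧ (∀ g : G, sQ g = 0 → (∃ B : F, m g = sbar B) → ∃ h : G, g = sQ h)
    -- surjectivity of the induced map
    ∧ (∀ A : F, sbar A = 0 →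
        ∃ (g : G) (B : F), sQ g = 0 ∧ A = sbar B + m g) := by
  refine ⟨?_, ?_, ?_, ?_⟩
  · intro g hg
    have := hchain g
    rw [hg, map_zero, add_zero] at this
    exact this
  · intro h
    refine ⟨-(m h), ?_⟩
    have := hchain h
    rw [map_neg]
    exact eq_neg_of_add_eq_zero_right this
  · intro g hg ⟨B, hB⟩
    obtain ⟨B', h, _, hgh⟩ := hacyc (-B) g (by rw [map_neg, hB]; abel) hg
    exact ⟨h, hgh⟩
  · intro A hA
    obtain ⟨B, h, hAB, hh⟩ := hacyc A 0 (by rw [map_zero, add_zero, hA]) (map_zero _)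
    exact ⟨h, B, hh.symm, hAB⟩
end

section
/- In the dimensionally regularized setting, if S_{ρ*} = S_τ + θ_τ ρ* with ρ* an odd constant of ghost number -1 satisfying (ρ*)² = 0, and θ_τ = (1/(2τ))(S_τ,S_τ) + (1/τ)Δ_c S_τ, then (1/2)(S_{ρ*},S_{ρ*}) + Δ_c S_{ρ*} = τ ∂^R S_{ρ*}/∂ρ*, using only (ρ*)² = 0, nilpotency Δ_c² = 0, and the derivation property of Δ_c. -/
/-!
Write `E = ½ (S,S) + Δ_c S`, so that `θ_τ = τ⁻¹ E`. The `ρ*`-free part of the extended master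
equation is then `E = τ θ_τ`, and, `ρ*` being odd with `(ρ*)² = 0`, the `ρ*`-part is
`τ⁻¹ (½ ((E,S) - (S,E)) - Δ_c E)`. This vanishes by a Bianchi-type identity: the graded
Jacobi identity kills `(S,(S,S))` and `((S,S),S)`, so `(E,S) - (S,E) = (Δ_c S,S) - (S,Δ_c S)`,
which is `Δ_c (S,S) = 2 Δ_c E` because `Δ_c` is a derivation of the bracket and `Δ_c² = 0`.
-/

section AntibracketIdentities

variable {A : Type*} [AddCommGroup A] [Module ℚ A]

/-- For every `X` the three Jacobi terms of `(X, X, X)` coincide, so `3 (X,(X,X)) = 0`. -/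
theorem bracket_self_bracket_self_eq_zero (br : A → A → A) (deg : A → ℤ)
    (hjac : ∀ X Y Z : A,
      ((-1 : ℚ) ^ ((deg X + 1) * (deg Z + 1))) • br X (br Y Z)
        + ((-1 : ℚ) ^ ((deg Y + 1) * (deg X + 1))) • br Y (br Z X)
        + ((-1 : ℚ) ^ ((deg Z + 1) * (deg Y + 1))) • br Z (br X Y) = 0)
    (X : A) : br X (br X X) = 0 := by
  have h := hjac X X X
  rw [← add_smul, ← add_smul, smul_eq_zero] at h
  rcases h with h | h
  · have hsign : ((-1 : ℚ) ^ ((deg X + 1) * (deg X + 1))) ≠ 0 := zpow_ne_zero _ (by norm_num)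
    exact absurd (by linear_combination h / 3) hsign
  · exact h

theorem bracket_bracket_self_self_eq_zero (br : A → A → A) (deg : A → ℤ)
    (hanti : ∀ X Y : A,
      br X Y = -(((-1 : ℚ) ^ ((deg X + 1) * (deg Y + 1))) • br Y X))
    (hjac : ∀ X Y Z : A,
      ((-1 : ℚ) ^ ((deg X + 1) * (deg Z + 1))) • br X (br Y Z)
        + ((-1 : ℚ) ^ ((deg Y + 1) * (deg X + 1))) • br Y (br Z X)
        + ((-1 : ℚ) ^ ((deg Z + 1) * (deg Y + 1))) • br Z (br X Y) = 0)
    (X : A) : br (br X X) X = 0 := by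
  rw [hanti, bracket_self_bracket_self_eq_zero br deg hjac, smul_zero, neg_zero]

def masterDefect (br : A →ₗ[ℚ] A →ₗ[ℚ] A) (Δc : A →ₗ[ℚ] A) (S : A) : A :=
  (1 / 2 : ℚ) • br S S + Δc S

theorem map_masterDefect (br : A →ₗ[ℚ] A →ₗ[ℚ] A) (deg : A → ℤ)
    (hanti : ∀ X Y : A,
      br X Y = -(((-1 : ℚ) ^ ((deg X + 1) * (deg Y + 1))) • br Y X))
    (hjac : ∀ X Y Z : A,
      ((-1 : ℚ) ^ ((deg X + 1) * (deg Z + 1))) • br X (br Y Z)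
        + ((-1 : ℚ) ^ ((deg Y + 1) * (deg X + 1))) • br Y (br Z X)
        + ((-1 : ℚ) ^ ((deg Z + 1) * (deg Y + 1))) • br Z (br X Y) = 0)
    (Δc : A →ₗ[ℚ] A) (hΔnil : ∀ X : A, Δc (Δc X) = 0)
    (hder : ∀ X Y : A,
      Δc (br X Y) = br (Δc X) Y + ((-1 : ℚ) ^ (deg X + 1)) • br X (Δc Y))
    (S : A) (hdegS : deg S = 0) :
    Δc (masterDefect br Δc S)
      = (1 / 2 : ℚ) • (br (masterDefect br Δc S) S - br S (masterDefect br Δc S)) := by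
  have hSSS : br S (br S S) = 0 := bracket_self_bracket_self_eq_zero (br · ·) deg hjac S
  have hSSS' : br (br S S) S = 0 := bracket_bracket_self_self_eq_zero (br · ·) deg hanti hjac S
  simp only [masterDefect, map_add, map_smul, LinearMap.add_apply, LinearMap.smul_apply,
    hΔnil, hder, hdegS, hSSS, hSSS']
  module

end AntibracketIdentities

/-- With S_{ρ*} = S_τ + θ_τ ρ*, ρ* odd of ghost number -1 with
(ρ*)² = 0, and θ_τ = (1/(2τ))(S_τ,S_τ) + (1/τ)Δ_c S_τ, one has
(1/2)(S_{ρ*},S_{ρ*}) + Δ_c S_{ρ*} = τ ∂^R S_{ρ*}/∂ρ*, using only (ρ*)² = 0,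
Δ_c² = 0 and the derivation property of Δ_c.  A functional a + b ρ* is
modelled by the pair (a,b), with the induced bracket `Br`, induced operator
`Δc2`, and right ρ*-derivative `dρ`. -/
theorem rho_star_extended_master_equation
    {A : Type*} [AddCommGroup A] [Module ℚ A]
    (br : A →ₗ[ℚ] A →ₗ[ℚ] A) (deg : A → ℤ)
    (hanti : ∀ X Y : A,
      br X Y = -(((-1 : ℚ) ^ ((deg X + 1) * (deg Y + 1))) • br Y X))
    (hjac : ∀ X Y Z : A,
      ((-1 : ℚ) ^ ((deg X + 1) * (deg Z + 1))) • br X (br Y Z)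
        + ((-1 : ℚ) ^ ((deg Y + 1) * (deg X + 1))) • br Y (br Z X)
        + ((-1 : ℚ) ^ ((deg Z + 1) * (deg Y + 1))) • br Z (br X Y) = 0)
    (Δc : A →ₗ[ℚ] A)
    (hΔnil : ∀ X : A, Δc (Δc X) = 0)
    (hder : ∀ X Y : A,
      Δc (br X Y) = br (Δc X) Y + ((-1 : ℚ) ^ (deg X + 1)) • br X (Δc Y))
    (τ : ℚ) (hτ : τ ≠ 0)
    (Sτ : A) (hdegS : deg Sτ = 0)
    -- the pair (a,b) represents a + b ρ*; bracket, Δ_c and ∂^R/∂ρ* on pairs: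
    (Br : A × A → A × A → A × A)
    (hBr : ∀ a b c d : A,
      Br (a, b) (c, d) = (br a c, br b c + ((-1 : ℚ) ^ (deg a + 1)) • br a d))
    (Δc2 : A × A → A × A)
    (hΔc2 : ∀ a b : A, Δc2 (a, b) = (Δc a, -(Δc b)))
    (dρ : A × A → A × A)
    (hdρ : ∀ a b : A, dρ (a, b) = (b, 0))
    (θτ : A)
    (hθ : θτ = (1 / (2 * τ) : ℚ) • br Sτ Sτ + (1 / τ : ℚ) • Δc Sτ) :
    (1/2 : ℚ) • Br (Sτ, θτ) (Sτ, θτ) + Δc2 (Sτ, θτ) = τ • dρ (Sτ, θτ) := by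
  have hθE : θτ = τ⁻¹ • masterDefect br Δc Sτ := by
    rw [hθ, masterDefect, smul_add, smul_smul]
    congr 2 <;> field_simp
  have hΔE := map_masterDefect br deg hanti hjac Δc hΔnil hder Sτ hdegS
  rw [hBr, hΔc2, hdρ, hdegS, zero_add, zpow_one]
  refine Prod.ext ?_ ?_ <;>
    simp only [Prod.fst_add, Prod.snd_add, Prod.smul_fst, Prod.smul_snd]
  · rw [hθE, smul_inv_smul₀ hτ, masterDefect]
  · simp only [hθE, map_smul, LinearMap.smul_apply, hΔE]
    module
end

section
/- (Two-loop anomaly consistency) Suppose s̄A₂ = -(1/2)(∂^R S₀/∂ξ^B)[σ₁,σ₁]^B where ξ*_B[σ₁,σ₁]^B := (ξ*σ₁, ξ*σ₁)_ξ and s_Q(ξ*σ₁) = 0. Then (ξ*σ₁, ξ*σ₁)_ξ is an s_Q-cocycle, and by the triviality of H(s̃,E) there exist σ₂ and Σ₂ with (1/2)(ξ*σ₁,ξ*σ₁)_ξ = s_Q(ξ*_A σ₂^A) and A₂ = s̄Σ₂ + (∂^R S₀/∂ξ^B) σ₂^B. -/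
/-- Two-loop anomaly consistency: Suppose
s̄A₂ = -(1/2)(∂^R S₀/∂ξ^B)[σ₁,σ₁]^B, where ξ*[σ₁,σ₁] := (ξ*σ₁,ξ*σ₁)_ξ and
s_Q(ξ*σ₁) = 0.  Then (ξ*σ₁,ξ*σ₁)_ξ is an s_Q-cocycle (graded Jacobi), and by
triviality of H(s̃,E) there exist σ₂ and Σ₂ with
(1/2)(ξ*σ₁,ξ*σ₁)_ξ = s_Q(ξ*σ₂) and A₂ = s̄Σ₂ + (∂^R S₀/∂ξ^B)σ₂^B.
Here q1 = ξ*σ₁ ∈ G, m g = (∂^R S₀/∂ξ^B) g^B, s_Q = (Q,·)_ξ = brξ Q. -/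
theorem two_loop_anomaly_consistency
    {F G : Type*} [AddCommGroup F] [Module ℚ F] [AddCommGroup G] [Module ℚ G]
    (sbar : F →ₗ[ℚ] F) (sQ : G →ₗ[ℚ] G) (m : G →ₗ[ℚ] F)
    (brξ : G →ₗ[ℚ] G →ₗ[ℚ] G) (degG : G → ℤ)
    (Q : G)
    (hsQ : ∀ g : G, sQ g = brξ Q g)
    (hQQ : brξ Q Q = 0)
    -- graded Jacobi identity in (ξ,ξ*)-space
    (hjac : ∀ X Y Z : G,
      ((-1 : ℚ) ^ ((degG X + 1) * (degG Z + 1))) • brξ X (brξ Y Z)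
        + ((-1 : ℚ) ^ ((degG Y + 1) * (degG X + 1))) • brξ Y (brξ Z X)
        + ((-1 : ℚ) ^ ((degG Z + 1) * (degG Y + 1))) • brξ Z (brξ X Y) = 0)
    (hanti : ∀ X Y : G,
      brξ X Y = -(((-1 : ℚ) ^ ((degG X + 1) * (degG Y + 1))) • brξ Y X))
    (hsbar2 : ∀ A, sbar (sbar A) = 0)
    (hchain : ∀ g : G, sbar (m g) + m (sQ g) = 0)
    -- H(s̃,E) = 0 (equations (tr1)-(tr2) of the acyclicity theorem)
    (hacyc : ∀ (A : F) (g : G), sbar A + m g = 0 → sQ g = 0 →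
      ∃ (B : F) (h : G), A = sbar B + m h ∧ g = sQ h)
    (q1 : G)                  -- q1 = ξ*_A σ₁^A
    (hq1 : sQ q1 = 0)         -- the one-loop anomaly is an s_Q-cocycle
    (A2 : F)
    (hA2 : sbar A2 = -((1/2 : ℚ) • m (brξ q1 q1))) :
    -- (ξ*σ₁,ξ*σ₁)_ξ is an s_Q-cocycle
    sQ (brξ q1 q1) = 0
    -- and solvability for σ₂, Σ₂
    ∧ ∃ (σ2 : G) (Sig2 : F),
        (1/2 : ℚ) • brξ q1 q1 = sQ σ2 ∧ A2 = sbar Sig2 + m σ2 := by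
  have hQq1 : brξ Q q1 = 0 := by rw [← hsQ]; exact hq1
  have hq1Q : brξ q1 Q = 0 := by rw [hanti q1 Q, hQq1, smul_zero, neg_zero]
  have hj := hjac Q q1 q1
  rw [hq1Q, hQq1, map_zero, smul_zero, smul_zero, add_zero, add_zero] at hj
  have hcoc : sQ (brξ q1 q1) = 0 := by
    rw [hsQ]
    have hne : ((-1 : ℚ) ^ ((degG Q + 1) * (degG q1 + 1))) ≠ 0 := by
      apply zpow_ne_zero; norm_num
    exact (smul_eq_zero.mp hj).resolve_left hne
  refine ⟨hcoc, ?_⟩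
  obtain ⟨B, h, hB, hh⟩ := hacyc A2 ((1/2 : ℚ) • brξ q1 q1)
    (by rw [hA2, map_smul]; abel)
    (by rw [map_smul, hcoc, smul_zero])
  exact ⟨h, B, by rw [← hh], hB⟩
end
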